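/- For every nonnegative integer n, Q_0(n) = \sum_{k=0}^{\infty} pod((n - k(k+1)/2)/2), where pod(x) is understood to be 0 when x is not a nonnegative integer. -/

import Mathlib

/-- `Q0 n`: number of partitions of `n` into distinct parts none divisible by 4. -/
noncomputable def Q0 (n : ℕ) : ℕ :=
  Nat.card {p : n.Partition // p.parts.Nodup ∧ ∀ x ∈ p.parts, ¬ (4 ∣ x)}

/-- `pod n`: partitions of `n` into parts not congruent to 2 mod 4. -/
noncomputable def pod (n : ℕ) : ℕ :=
  Nat.card {p : n.Partition // ∀ x ∈ p.parts, x % 4 ≠ 2}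

/-!
Both sides are coefficients of power series: `∑ Q0(n) qⁿ = ∏_{4 ∤ k} (1 + qᵏ)` and
`∑ pod(n) q²ⁿ = ∏_{k ≢ 2 (mod 4)} (1 - q²ᵏ)⁻¹`, so the claim is the product identity
`∏_{4 ∤ k} (1 + qᵏ) · ∏_{k ≢ 2 (mod 4)} (1 - q²ᵏ) = ∑ q^(k(k+1)/2)`.
By Gauss's identity the right-hand side is `∏ (1 - qᵏ)(1 + qᵏ)²`, and the two products differ by
`∏ (1 + q⁴ᵏ) · ∏_{k odd} (1 - q⁴ᵏ)`, which is `1` by Euler's identity.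

Only coefficients up to `qⁿ` matter, so everything is done in `ℚ⟦X⟧ ⧸ (X^(n+1))`, where all the
products are finite. There Gauss's identity follows from the finite Cauchy identity
`∑_{j ≤ 2N} [2N, j] q^(e(j)) = ∏_{i<N} (1 + q^(i+1))(1 + qⁱ)` (a case of the q-binomial theorem,
with triangular exponents `e(j)`), since modulo `q^(n+1)` every Gaussian binomial `[2N, j]` with
`n ≤ j ≤ 2N - n` equals `1 / ∏_{1 ≤ i ≤ n} (1 - qⁱ)`.
-/

open Finset PowerSeries
open scoped PowerSeries.WithPiTopology

lemma Nat.succ_choose_two (j : ℕ) : (j + 1).choose 2 = j.choose 2 + j := by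
  rw [Nat.choose_succ_succ', Nat.choose_one_right, add_comm]

lemma Nat.sub_one_le_choose_two (c : ℕ) : c - 1 ≤ c.choose 2 := by
  cases c with
  | zero => simp
  | succ d => rw [Nat.succ_choose_two]; omega

@[to_additive]
lemma prod_range_eq_prod_range_of_le {M : Type*} [CommMonoid M] {f : ℕ → M} {n N : ℕ}
    (hf : ∀ i, n ≤ i → f i = 1) (h : n ≤ N) : ∏ i ∈ range N, f i = ∏ i ∈ range n, f i :=
  (prod_subset (range_subset_range.2 h) fun i _ hi => hf i (by simpa using hi)).symm

section GaussianBinomial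

variable {S : Type*} [CommRing S]

def qBinom (q : S) : ℕ → ℕ → S
  | _, 0 => 1
  | 0, _ + 1 => 0
  | m + 1, k + 1 => q ^ (k + 1) * qBinom q m (k + 1) + qBinom q m k

def qPoch (q : S) (m : ℕ) : S := ∏ i ∈ range m, (1 - q ^ (i + 1))

variable (q : S)

@[simp] lemma qBinom_zero_right (m : ℕ) : qBinom q m 0 = 1 := by cases m <;> rfl

@[simp] lemma qBinom_zero_succ (k : ℕ) : qBinom q 0 (k + 1) = 0 := rfl

lemma qBinom_succ_succ (m k : ℕ) :
    qBinom q (m + 1) (k + 1) = q ^ (k + 1) * qBinom q m (k + 1) + qBinom q m k := rfl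

lemma qBinom_eq_zero_of_lt : ∀ {m k : ℕ}, m < k → qBinom q m k = 0
  | 0, _ + 1, _ => rfl
  | _ + 1, _ + 1, h => by
    rw [qBinom_succ_succ, qBinom_eq_zero_of_lt (by omega), qBinom_eq_zero_of_lt (by omega),
      mul_zero, add_zero]

lemma map_qBinom {T F : Type*} [CommRing T] [FunLike F S T] [RingHomClass F S T] (f : F) :
    ∀ m k, f (qBinom q m k) = qBinom (f q) m k
  | _, 0 => by simp
  | 0, _ + 1 => by simp
  | m + 1, k + 1 => by simp [qBinom_succ_succ, map_qBinom f m]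

lemma qPoch_succ (m : ℕ) : qPoch q (m + 1) = qPoch q m * (1 - q ^ (m + 1)) :=
  prod_range_succ _ _

theorem qBinom_mul_qPoch_mul_qPoch {m k : ℕ} (h : k ≤ m) :
    qBinom q m k * qPoch q k * qPoch q (m - k) = qPoch q m := by
  induction m generalizing k with
  | zero =>
    obtain rfl : k = 0 := by omega
    simp [qPoch]
  | succ m ih =>
    rcases k with _ | k
    · simp [qPoch]
    obtain ⟨d, rfl⟩ : ∃ d, m = k + d := ⟨m - k, by omega⟩
    have hk := ih (k := k) (by omega)
    rw [show k + d - k = d by omega] at hk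
    rw [show k + d + 1 - (k + 1) = d by omega, qBinom_succ_succ, qPoch_succ q k]
    rcases d with _ | d
    · rw [qBinom_eq_zero_of_lt q (by omega), qPoch_succ]
      linear_combination (1 - q ^ (k + 1)) * hk
    · have hk1 := ih (k := k + 1) (by omega)
      rw [show k + (d + 1) - (k + 1) = d by omega, qPoch_succ q k] at hk1
      rw [qPoch_succ q d] at hk
      rw [qPoch_succ q (k + (d + 1)), qPoch_succ q d]
      linear_combination (q ^ (k + 1) * (1 - q ^ (d + 1))) * hk1 + (1 - q ^ (k + 1)) * hk

theorem prod_add_mul_pow_eq_sum_qBinom (a : S) (m : ℕ) (b : S) :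
    ∏ i ∈ range m, (a + b * q ^ i) =
      ∑ j ∈ range (m + 1), qBinom q m j * q ^ j.choose 2 * b ^ j * a ^ (m - j) := by
  induction m generalizing b with
  | zero => simp
  | succ m ih =>
    have hshift : ∏ i ∈ range m, (a + b * q ^ (i + 1)) = ∏ i ∈ range m, (a + b * q * q ^ i) :=
      prod_congr rfl fun i _ => by ring
    have hA : ∑ j ∈ range (m + 1), qBinom q m j * q ^ j.choose 2 * (b * q) ^ j * a ^ (m - j) * a =
        ∑ j ∈ range (m + 1), q ^ (j + 1) * qBinom q m (j + 1) * q ^ (j + 1).choose 2 *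
          b ^ (j + 1) * a ^ (m + 1 - (j + 1)) + a ^ (m + 1) := by
      rw [sum_range_succ', sum_range_succ _ m, qBinom_eq_zero_of_lt q (Nat.lt_succ_self m)]
      simp only [qBinom_zero_right, Nat.choose_zero_succ, pow_zero, Nat.sub_zero, mul_zero,
        zero_mul, add_zero, one_mul, ← pow_succ]
      congr 1
      refine sum_congr rfl fun j hj => ?_
      rw [show m + 1 - (j + 1) = m - (j + 1) + 1 by rw [mem_range] at hj; omega]
      ring
    have hB : ∑ j ∈ range (m + 1), qBinom q m j * q ^ j.choose 2 * (b * q) ^ j * a ^ (m - j) * b =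
        ∑ j ∈ range (m + 1), qBinom q m j * q ^ (j + 1).choose 2 * b ^ (j + 1) *
          a ^ (m + 1 - (j + 1)) :=
      sum_congr rfl fun j _ => by rw [Nat.succ_choose_two, Nat.add_sub_add_right]; ring
    rw [prod_range_succ', hshift, ih, pow_zero, mul_one, sum_range_succ' _ (m + 1)]
    simp only [qBinom_succ_succ, add_mul, sum_add_distrib, mul_add, sum_mul, hA, hB,
      Nat.reduceSubDiff, qBinom_zero_right, Nat.choose_zero_succ, pow_zero, mul_one, tsub_zero,
      one_mul]
    ring

lemma choose_two_add_mul_sub {N j : ℕ} (hj : j ≤ 2 * N) :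
    j.choose 2 + N * (2 * N - j) =
      N.choose 2 + N * N + ((j - N).choose 2 + (N + 1 - j).choose 2) := by
  rcases le_or_gt j N with h | h
  · obtain ⟨d, rfl⟩ : ∃ d, N = j + d := ⟨N - j, by omega⟩
    rw [show 2 * (j + d) - j = j + 2 * d by omega, show j - (j + d) = 0 by omega,
      show j + d + 1 - j = d + 1 by omega]
    apply Nat.cast_injective (R := ℚ)
    push_cast [Nat.cast_choose_two]
    ring
  · obtain ⟨d, rfl⟩ : ∃ d, j = N + 1 + d := ⟨j - N - 1, by omega⟩
    rw [show 2 * N - (N + 1 + d) = N - 1 - d by omega, show N + 1 + d - N = d + 1 by omega,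
      show N + 1 - (N + 1 + d) = 0 by omega]
    obtain ⟨e, rfl⟩ : ∃ e, N = d + 1 + e := ⟨N - d - 1, by omega⟩
    rw [show d + 1 + e - 1 - d = e by omega]
    apply Nat.cast_injective (R := ℚ)
    push_cast [Nat.cast_choose_two]
    ring

/-- Because of truncated subtraction only one of the two binomials in the exponent is nonzero:
it is the triangular number `T(N - j)` for `j ≤ N` and `T(j - N - 1)` for `j > N`. -/
theorem sum_qBinom_mul_pow_eq_prod [IsDomain S] {q : S} (hq : q ≠ 0) (N : ℕ) :
    ∑ j ∈ range (2 * N + 1), qBinom q (2 * N) j * q ^ ((j - N).choose 2 + (N + 1 - j).choose 2) =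
      ∏ i ∈ range N, (1 + q ^ (i + 1)) * (1 + q ^ i) := by
  have hbinom := prod_add_mul_pow_eq_sum_qBinom q (q ^ N) (2 * N) 1
  have hlow : ∏ i ∈ range N, (q ^ N + 1 * q ^ i) =
      q ^ N.choose 2 * ∏ i ∈ range N, (1 + q ^ (i + 1)) := by
    rw [← prod_range_reflect (fun i => 1 + q ^ (i + 1)), Nat.choose_two_right, ← sum_range_id,
      ← prod_pow_eq_pow_sum, ← prod_mul_distrib]
    refine prod_congr rfl fun i hi => ?_
    rw [mem_range] at hi
    rw [show N - 1 - i + 1 = N - i by omega, mul_add, mul_one, ← pow_add,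
      show i + (N - i) = N by omega]
    ring
  have hhigh : ∏ i ∈ range N, (q ^ N + 1 * q ^ (N + i)) =
      q ^ (N * N) * ∏ i ∈ range N, (1 + q ^ i) := by
    calc _ = ∏ i ∈ range N, q ^ N * (1 + q ^ i) := prod_congr rfl fun i _ => by ring
      _ = _ := by rw [prod_mul_distrib, prod_const, card_range, pow_mul]
  rw [two_mul, prod_range_add, hlow, hhigh, ← two_mul] at hbinom
  refine mul_left_cancel₀ (pow_ne_zero (N.choose 2 + N * N) hq) ?_
  rw [prod_mul_distrib, mul_sum]
  calc _ = ∑ j ∈ range (2 * N + 1),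
        qBinom q (2 * N) j * q ^ j.choose 2 * 1 ^ j * (q ^ N) ^ (2 * N - j) :=
        sum_congr rfl fun j hj => by
          rw [one_pow, mul_one, ← pow_mul, mul_assoc, ← pow_add,
            choose_two_add_mul_sub (by simpa [Nat.lt_succ_iff] using hj)]
          ring
    _ = _ := by rw [← hbinom]; ring

end GaussianBinomial

section FiniteProducts

variable {M : Type*} [CommMonoid M] {f : ℕ → M}

lemma finite_mulSupport_of_eq_one (n : ℕ) (h : ∀ k, n < k → f k = 1) :
    (Function.mulSupport f).Finite :=
  (Set.finite_Iic n).subset fun k hk => not_lt.1 fun hnk => hk (h k hnk)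

lemma finprod_pos_eq_prod_range (n : ℕ) (hf : ∀ k, n < k → f k = 1) :
    ∏ᶠ k ∈ {k : ℕ | 0 < k}, f k = ∏ i ∈ range n, f (i + 1) := by
  rw [finprod_mem_eq_prod_of_subset f (t := (range n).map (addRightEmbedding 1)), prod_map]
  · rfl
  · rintro k ⟨hk, hfk⟩
    have hk : 0 < k := hk
    simp only [coe_map, coe_range, Set.mem_image, Set.mem_Iio, addRightEmbedding_apply]
    exact ⟨k - 1, by by_contra h; exact hfk (hf k (by omega)), by omega⟩
  · simp

lemma prod_range_ite_eq_finprod (p : ℕ → Prop) [DecidablePred p] (n : ℕ)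
    (hf : ∀ k, n < k → f k = 1) :
    ∏ i ∈ range n, (if p (i + 1) then f (i + 1) else 1) = ∏ᶠ k ∈ {k : ℕ | 0 < k ∧ p k}, f k := by
  rw [← finprod_pos_eq_prod_range (f := fun k => if p k then f k else 1) n
    fun k hk => by simp [hf k hk], finprod_mem_def, finprod_mem_def]
  congr 1
  ext k
  simp only [Set.mulIndicator_apply, Set.mem_ofPred_eq]
  split_ifs <;> tauto

end FiniteProducts

section Nilpotent

variable {A : Type*} [CommRing A] {x : A} {n : ℕ}

lemma qPoch_eq_of_le (hx : x ^ (n + 1) = 0) {m : ℕ} (hm : n ≤ m) : qPoch x m = qPoch x n :=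
  prod_range_eq_prod_range_of_le (fun i hi => by rw [pow_eq_zero_of_le (by omega) hx, sub_zero]) hm

lemma isUnit_one_sub_pow (hx : x ^ (n + 1) = 0) {k : ℕ} (hk : 0 < k) : IsUnit (1 - x ^ k) :=
  (IsNilpotent.pow_of_pos ⟨n + 1, hx⟩ hk.ne').isUnit_one_sub

lemma qPoch_mul_qBinom_eq_one (hx : x ^ (n + 1) = 0) {m j : ℕ} (hj : n ≤ j) (hjm : j + n ≤ m) :
    qPoch x n * qBinom x m j = 1 := by
  have hu : IsUnit (qPoch x n) := IsUnit.prod_iff.2 fun i _ => isUnit_one_sub_pow hx i.succ_pos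
  have key := qBinom_mul_qPoch_mul_qPoch x (m := m) (k := j) (by omega)
  rw [qPoch_eq_of_le hx hj, qPoch_eq_of_le hx (m := m - j) (by omega),
    qPoch_eq_of_le hx (m := m) (by omega)] at key
  rw [mul_comm, hu.mul_right_cancel (key.trans (one_mul _).symm)]

lemma sum_pow_choose_two_add_choose_two (hx : x ^ (n + 1) = 0) {N : ℕ} (hN : n < N) :
    ∑ j ∈ range (2 * N + 1), x ^ ((j - N).choose 2 + (N + 1 - j).choose 2) =
      2 * ∑ m ∈ range (n + 1), x ^ (m * (m + 1) / 2) := by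
  have htrunc : ∀ M, n + 1 ≤ M →
      ∑ m ∈ range M, x ^ ((m + 1).choose 2) = ∑ m ∈ range (n + 1), x ^ (m * (m + 1) / 2) := by
    intro M hM
    rw [sum_range_eq_sum_range_of_le (fun m hm => pow_eq_zero_of_le ?_ hx) hM]
    · exact sum_congr rfl fun m _ => by rw [Nat.choose_two_right, Nat.add_sub_cancel, mul_comm]
    · have := Nat.sub_one_le_choose_two (m + 1); omega
  rw [show 2 * N + 1 = (N + 1) + N by omega, sum_range_add, two_mul]
  congr 1
  · rw [← htrunc (N + 1) (by omega), ← sum_range_reflect]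
    refine sum_congr rfl fun j hj => ?_
    rw [mem_range] at hj
    rw [show N + 1 - 1 - j - N = 0 by omega, show N + 1 - (N + 1 - 1 - j) = j + 1 by omega,
      Nat.choose_zero_succ, zero_add]
  · rw [← htrunc N (by omega)]
    refine sum_congr rfl fun j _ => ?_
    rw [show N + 1 + j - N = j + 1 by omega, show N + 1 - (N + 1 + j) = 0 by omega,
      Nat.choose_zero_succ, add_zero]

theorem sum_pow_triangle_eq_prod [Algebra ℚ A] (hx : x ^ (n + 1) = 0) :
    ∑ m ∈ range (n + 1), x ^ (m * (m + 1) / 2) =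
      ∏ i ∈ range n, (1 - x ^ (i + 1)) * (1 + x ^ (i + 1)) ^ 2 := by
  -- With `N = 2n + 1`, every term of the Cauchy identity with exponent `≤ n` has
  -- `n ≤ j ≤ 2N - n`, so that its Gaussian binomial is the inverse of `qPoch x n`.
  set N := 2 * n + 1
  have hcauchy := congrArg (Polynomial.aeval x)
    (sum_qBinom_mul_pow_eq_prod (Polynomial.X_ne_zero (R := ℚ)) N)
  simp only [map_sum, map_prod, map_mul, map_pow, map_add, map_one, Polynomial.aeval_X,
    map_qBinom] at hcauchy
  have hterm : ∀ j ∈ range (2 * N + 1),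
      qPoch x n * (qBinom x (2 * N) j * x ^ ((j - N).choose 2 + (N + 1 - j).choose 2)) =
        x ^ ((j - N).choose 2 + (N + 1 - j).choose 2) := by
    intro j hj
    rw [mem_range] at hj
    by_cases hjn : (j - N).choose 2 + (N + 1 - j).choose 2 ≤ n
    · have h1 := Nat.sub_one_le_choose_two (j - N)
      have h2 := Nat.sub_one_le_choose_two (N + 1 - j)
      rw [← mul_assoc, qPoch_mul_qBinom_eq_one hx (by omega) (by omega), one_mul]
    · rw [pow_eq_zero_of_le (by omega) hx, mul_zero, mul_zero]
  have hone : ∀ M, n ≤ M → ∏ i ∈ range M, (1 + x ^ (i + 1)) = ∏ i ∈ range n, (1 + x ^ (i + 1)) :=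
    fun M => prod_range_eq_prod_range_of_le fun i hi => by
      rw [pow_eq_zero_of_le (by omega) hx, add_zero]
  have h2 : IsUnit (2 : A) := by
    simpa only [map_ofNat] using (IsUnit.mk0 (2 : ℚ) two_ne_zero).map (algebraMap ℚ A)
  refine h2.mul_left_cancel ?_
  rw [← sum_pow_choose_two_add_choose_two hx (show n < N by omega), ← sum_congr rfl hterm,
    ← mul_sum, hcauchy, prod_mul_distrib, prod_range_succ' (fun i => 1 + x ^ i),
    hone N (by omega), hone (2 * n) (by omega), qPoch, prod_mul_distrib, prod_pow]
  ring

theorem finprod_one_add_pow_mul_finprod_odd_one_sub_pow (hx : x ^ (n + 1) = 0) :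
    (∏ᶠ k ∈ {k : ℕ | 0 < k}, (1 + x ^ k)) * ∏ᶠ k ∈ {k : ℕ | Odd k}, (1 - x ^ k) = 1 := by
  have hfin : ∀ s : Set ℕ, (s ∩ Function.mulSupport fun k : ℕ => 1 - x ^ k).Finite := fun s =>
    (finite_mulSupport_of_eq_one n fun k hk => by simp [pow_eq_zero_of_le hk hx]).inter_of_right s
  have hsplit := finprod_mem_inter_mul_sdiff' {k : ℕ | Odd k} (hfin {k : ℕ | 0 < k})
  have hodd : {k : ℕ | 0 < k} ∩ {k | Odd k} = {k | Odd k} := by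
    ext k; simpa using Odd.pos
  have heven : {k : ℕ | 0 < k} \ {k | Odd k} = (2 * ·) '' {k | 0 < k} := by
    ext k
    simp only [Set.mem_sdiff, Set.mem_ofPred_eq, Nat.not_odd_iff_even, Set.mem_image]
    constructor
    · rintro ⟨hk, ⟨m, rfl⟩⟩; exact ⟨m, by omega, by omega⟩
    · rintro ⟨m, hm, rfl⟩; exact ⟨by omega, ⟨m, by omega⟩⟩
  rw [hodd, heven, finprod_mem_image (fun a _ b _ h => by simpa using h)] at hsplit
  have hpair : (∏ᶠ k ∈ {k : ℕ | 0 < k}, (1 + x ^ k)) * ∏ᶠ k ∈ {k : ℕ | 0 < k}, (1 - x ^ k) =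
      ∏ᶠ k ∈ {k : ℕ | 0 < k}, (1 - x ^ (2 * k)) := by
    rw [← finprod_mem_mul_distrib' ((finite_mulSupport_of_eq_one n fun k hk => by
      simp [pow_eq_zero_of_le hk hx]).inter_of_right _) (hfin _)]
    exact finprod_mem_congr rfl fun k _ => by ring
  have hunit : IsUnit (∏ᶠ k ∈ {k : ℕ | 0 < k}, (1 - x ^ (2 * k))) :=
    finprod_mem_induction IsUnit isUnit_one (fun _ _ => IsUnit.mul)
      fun k (hk : 0 < k) => isUnit_one_sub_pow hx (by omega)
  refine hunit.mul_right_cancel ?_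
  rw [one_mul, mul_assoc, hsplit, hpair]

theorem finprod_one_add_pow_mul_finprod_one_sub_pow_two_mul (hx : x ^ (n + 1) = 0) :
    (∏ᶠ k ∈ {k : ℕ | 0 < k ∧ ¬ 4 ∣ k}, (1 + x ^ k)) *
        ∏ᶠ k ∈ {k : ℕ | 0 < k ∧ k % 4 ≠ 2}, (1 - x ^ (2 * k)) =
      ∏ᶠ k ∈ {k : ℕ | 0 < k}, (1 - x ^ k) * (1 + x ^ k) ^ 2 := by
  have hfinA : ({k : ℕ | 0 < k} ∩ Function.mulSupport fun k : ℕ => 1 + x ^ k).Finite :=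
    (finite_mulSupport_of_eq_one n fun k hk => by simp [pow_eq_zero_of_le hk hx]).inter_of_right _
  have hfinB : ({k : ℕ | 0 < k} ∩ Function.mulSupport fun k : ℕ => 1 - x ^ (2 * k)).Finite :=
    (finite_mulSupport_of_eq_one n fun k hk => by
      simp [pow_eq_zero_of_le (show n + 1 ≤ 2 * k by omega) hx]).inter_of_right _
  have hA := finprod_mem_inter_mul_sdiff' {k : ℕ | 4 ∣ k} hfinA
  have hA' : {k : ℕ | 0 < k} ∩ {k | 4 ∣ k} = (4 * ·) '' {k | 0 < k} := by
    ext k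
    simp only [Set.mem_inter_iff, Set.mem_ofPred_eq, Set.mem_image]
    constructor
    · rintro ⟨hk, ⟨m, rfl⟩⟩; exact ⟨m, by omega, rfl⟩
    · rintro ⟨m, hm, rfl⟩; exact ⟨by omega, ⟨m, rfl⟩⟩
  rw [hA', finprod_mem_image (fun a _ b _ h => by simpa using h),
    show {k : ℕ | 0 < k} \ {k | 4 ∣ k} = {k | 0 < k ∧ ¬ 4 ∣ k} from rfl] at hA
  have hB := finprod_mem_inter_mul_sdiff' {k : ℕ | k % 4 = 2} hfinB
  have hB' : {k : ℕ | 0 < k} ∩ {k | k % 4 = 2} = (2 * ·) '' {k | Odd k} := by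
    ext k
    simp only [Set.mem_inter_iff, Set.mem_ofPred_eq, Set.mem_image]
    constructor
    · rintro ⟨hk, h2⟩; exact ⟨k / 2, by rw [Nat.odd_iff]; omega, by omega⟩
    · rintro ⟨m, hm, rfl⟩; rw [Nat.odd_iff] at hm; exact ⟨by omega, by omega⟩
  rw [hB', finprod_mem_image (fun a _ b _ h => by simpa using h),
    show {k : ℕ | 0 < k} \ {k | k % 4 = 2} = {k | 0 < k ∧ k % 4 ≠ 2} from rfl] at hB
  have heuler := finprod_one_add_pow_mul_finprod_odd_one_sub_pow
    (show (x ^ 4) ^ (n + 1) = 0 by rw [← pow_mul]; exact pow_eq_zero_of_le (by omega) hx)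
  simp only [← pow_mul] at heuler
  rw [finprod_mem_congr rfl fun k _ => show (1 - x ^ k) * (1 + x ^ k) ^ 2 =
    (1 + x ^ k) * (1 - x ^ (2 * k)) by ring, finprod_mem_mul_distrib' hfinA hfinB, ← hA, ← hB,
    finprod_mem_congr rfl fun k _ => show 1 - x ^ (2 * (2 * k)) = 1 - x ^ (4 * k) by
      rw [← mul_assoc]; norm_num]
  linear_combination -(∏ᶠ k ∈ {k : ℕ | 0 < k ∧ ¬ 4 ∣ k}, (1 + x ^ k)) *
    (∏ᶠ k ∈ {k : ℕ | 0 < k ∧ k % 4 ≠ 2}, (1 - x ^ (2 * k))) * heuler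

end Nilpotent

section Truncation

variable {R : Type*} [CommRing R]

noncomputable abbrev truncMk (n : ℕ) : R⟦X⟧ →+* R⟦X⟧ ⧸ Ideal.span {(X : R⟦X⟧) ^ (n + 1)} :=
  Ideal.Quotient.mk _

lemma truncMk_eq_truncMk_iff {n : ℕ} {f g : R⟦X⟧} :
    truncMk n f = truncMk n g ↔ ∀ d ≤ n, coeff d f = coeff d g := by
  simp [Ideal.Quotient.eq, Ideal.mem_span_singleton, X_pow_dvd_iff, sub_eq_zero]

lemma truncMk_X_pow_succ (n : ℕ) : truncMk n (X : R⟦X⟧) ^ (n + 1) = 0 := by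
  rw [← map_pow, Ideal.Quotient.eq_zero_iff_mem]
  exact Ideal.mem_span_singleton_self _

lemma truncMk_expand_eq_of_truncMk_eq {n p : ℕ} (hp : p ≠ 0) {f g : R⟦X⟧}
    (h : truncMk n f = truncMk n g) : truncMk n (expand p hp f) = truncMk n (expand p hp g) := by
  rw [truncMk_eq_truncMk_iff] at h ⊢
  intro d hd
  simp only [coeff_expand]
  split_ifs
  · exact h _ ((Nat.div_le_self d p).trans hd)
  · rfl

theorem HasProd.truncMk_eq_prod [TopologicalSpace R] [T2Space R] {ι : Type*} {F : ι → R⟦X⟧}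
    {g : R⟦X⟧} (h : HasProd F g) (n : ℕ) (t : Finset ι) (ht : ∀ i ∉ t, truncMk n (F i) = 1) :
    truncMk n g = ∏ i ∈ t, truncMk n (F i) := by
  classical
  rw [← map_prod, truncMk_eq_truncMk_iff]
  intro d hd
  have hev : ∀ s ≥ t, coeff d (∏ i ∈ s, F i) = coeff d (∏ i ∈ t, F i) := fun s hs =>
    truncMk_eq_truncMk_iff.1 (by rw [map_prod, map_prod, prod_subset hs fun i _ hi => ht i hi]) d hd
  exact tendsto_nhds_unique (((WithPiTopology.continuous_coeff R d).tendsto g).comp h)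
    (tendsto_atTop_of_eventually_const hev)

end Truncation

theorem hasProd_Q0 :
    HasProd (fun i => 1 + if ¬ 4 ∣ i + 1 then (X : ℚ⟦X⟧) ^ (i + 1) else 0)
      (PowerSeries.mk fun n => (Q0 n : ℚ)) := by
  set f : ℕ → ℕ → ℚ := fun i c => if c < 2 ∧ ¬ 4 ∣ i then 1 else 0
  have hfactor : ∀ i, ∑' j, f (i + 1) (j + 1) • (X : ℚ⟦X⟧) ^ ((i + 1) * (j + 1)) =
      if ¬ 4 ∣ i + 1 then X ^ (i + 1) else 0 := fun i => by
    rw [tsum_eq_single 0 fun j hj => by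
      simp only [f, show ¬ j + 1 < 2 by omega, false_and, if_false, zero_smul]]
    simp [f]
  have hcoeff : Nat.Partition.genFun f = PowerSeries.mk fun n => (Q0 n : ℚ) := by
    ext n
    simp only [coeff_mk, Nat.Partition.coeff_genFun, Finsupp.prod, prod_boole, f]
    rw [sum_boole, Q0, Nat.card_eq_fintype_card, Fintype.card_subtype]
    congr 3
    ext p
    simp only [Multiset.toFinsupp_support, Multiset.mem_toFinset, Multiset.toFinsupp_apply,
      Multiset.nodup_iff_count_le_one, Nat.lt_succ_iff]
    constructor
    · intro h
      refine ⟨fun a => ?_, fun a ha => (h a ha).2⟩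
      by_cases ha : a ∈ p.parts
      · exact (h a ha).1
      · simp [Multiset.count_eq_zero_of_notMem ha]
    · exact fun h a ha => ⟨h.1 a, h.2 a ha⟩
  simpa only [hfactor, hcoeff] using Nat.Partition.hasProd_genFun f

theorem hasProd_pod :
    HasProd (fun i => if (i + 1) % 4 ≠ 2 then ∑' j, (X : ℚ⟦X⟧) ^ ((i + 1) * j) else 1)
      (PowerSeries.mk fun n => (pod n : ℚ)) := by
  have hcard : ∀ n, #(Nat.Partition.restricted n (· % 4 ≠ 2)) = pod n := fun n => by
    rw [pod, Nat.card_eq_fintype_card, Fintype.card_subtype]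
    rfl
  simpa only [hcard] using Nat.Partition.hasProd_powerSeriesMk_card_restricted ℚ (· % 4 ≠ 2)

theorem truncMk_Q0 (n : ℕ) :
    truncMk n (PowerSeries.mk fun m => (Q0 m : ℚ)) =
      ∏ᶠ k ∈ {k : ℕ | 0 < k ∧ ¬ 4 ∣ k}, (1 + truncMk n (X : ℚ⟦X⟧) ^ k) := by
  have hx := truncMk_X_pow_succ (R := ℚ) n
  rw [hasProd_Q0.truncMk_eq_prod n (range n) fun i hi => ?_,
    ← prod_range_ite_eq_finprod _ n fun k hk => by simp [pow_eq_zero_of_le hk hx]]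
  · exact prod_congr rfl fun i _ => by split_ifs <;> simp
  · have : n + 1 ≤ i + 1 := by simpa using hi
    split_ifs <;> simp [pow_eq_zero_of_le this hx]

theorem truncMk_expand_pod_mul (n : ℕ) :
    truncMk n (expand 2 two_ne_zero (PowerSeries.mk fun m => (pod m : ℚ))) *
      ∏ᶠ k ∈ {k : ℕ | 0 < k ∧ k % 4 ≠ 2}, (1 - truncMk n (X : ℚ⟦X⟧) ^ (2 * k)) = 1 := by
  have hx := truncMk_X_pow_succ (R := ℚ) n
  set G : ℕ → ℚ⟦X⟧ := fun i => if (i + 1) % 4 ≠ 2 then 1 - X ^ (i + 1) else 1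
  have hinv : ∀ i, (if (i + 1) % 4 ≠ 2 then ∑' j, (X : ℚ⟦X⟧) ^ ((i + 1) * j) else 1) * G i = 1 :=
    fun i => by
      simp only [G, pow_mul]
      split_ifs
      · exact WithPiTopology.tsum_pow_mul_one_sub_of_constantCoeff_eq_zero (by simp)
      · exact one_mul 1
  have hG : ∀ i, n ≤ i → truncMk n (G i) = 1 := fun i hi => by
    simp only [G]
    split_ifs <;> simp [pow_eq_zero_of_le (show n + 1 ≤ i + 1 by omega) hx]
  have hpod : truncMk n ((PowerSeries.mk fun m => (pod m : ℚ)) * ∏ i ∈ range n, G i) = 1 := by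
    rw [map_mul, map_prod, hasProd_pod.truncMk_eq_prod n (range n) fun i hi => ?_,
      ← prod_mul_distrib]
    · exact prod_eq_one fun i _ => by rw [← map_mul, hinv, map_one]
    · have h := congrArg (truncMk n) (hinv i)
      rwa [map_mul, hG i (by simpa using hi), mul_one, map_one] at h
  have hexp := truncMk_expand_eq_of_truncMk_eq two_ne_zero (hpod.trans (map_one _).symm)
  rw [map_one, map_mul, map_mul, map_prod, map_prod, map_one] at hexp
  rw [← prod_range_ite_eq_finprod _ n fun k hk => by
    simp [pow_eq_zero_of_le (show n + 1 ≤ 2 * k by omega) hx]]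
  refine (congrArg (_ * ·) (prod_congr rfl fun i _ => ?_)).trans hexp
  simp only [G, apply_ite (truncMk n), apply_ite (expand 2 two_ne_zero), map_sub, map_one,
    map_pow, expand_X, ← pow_mul]

/-- The term `pod((n - k(k+1)/2)/2)`, understood to be `0` unless `k(k+1)/2 ≤ n` and
`n - k(k+1)/2` is even (i.e. unless the argument is a nonnegative integer).
Terms with `k(k+1)/2 > n` vanish and any nonzero term has `k ≤ n`, so the infinite
sum equals the finite sum over `0 ≤ k ≤ n`. -/
theorem stmt_13 (n : ℕ) :
    Q0 n = ∑ k ∈ Finset.range (n + 1),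
      if k * (k + 1) / 2 ≤ n ∧ (n - k * (k + 1) / 2) % 2 = 0 then
        pod ((n - k * (k + 1) / 2) / 2)
      else 0 := by
  set x := truncMk n (X : ℚ⟦X⟧) with hxdef
  have hx : x ^ (n + 1) = 0 := truncMk_X_pow_succ n
  have hpod := truncMk_expand_pod_mul n
  rw [← hxdef] at hpod
  have hid : truncMk n (PowerSeries.mk fun m => (Q0 m : ℚ)) =
      truncMk n ((∑ k ∈ range (n + 1), X ^ (k * (k + 1) / 2)) *
        expand 2 two_ne_zero (PowerSeries.mk fun m => (pod m : ℚ))) := by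
    rw [map_mul, map_sum, truncMk_Q0]
    simp only [map_pow, ← hxdef]
    rw [sum_pow_triangle_eq_prod hx, ← finprod_pos_eq_prod_range n
      (f := fun k => (1 - x ^ k) * (1 + x ^ k) ^ 2) fun k hk => by simp [pow_eq_zero_of_le hk hx],
      ← finprod_one_add_pow_mul_finprod_one_sub_pow_two_mul hx]
    linear_combination -(∏ᶠ k ∈ {k : ℕ | 0 < k ∧ ¬ 4 ∣ k}, (1 + x ^ k)) * hpod
  have hcoeff := truncMk_eq_truncMk_iff.1 hid n le_rfl
  rw [coeff_mk, sum_mul, map_sum] at hcoeff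
  rw [← Nat.cast_inj (R := ℚ), hcoeff, Nat.cast_sum]
  refine sum_congr rfl fun k _ => ?_
  rw [coeff_X_pow_mul', coeff_expand]
  split_ifs <;> first | rfl | omega | simp
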